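/- arXiv:2412.04771 — 3 statements merged into one kernel-verified Lean document; each statement's English description precedes it below -/
import Mathlib

section
/- Let S be a finite set with |S| ≥ 2. On a probability space suppose given: (a) for each C ∈ S a random variable F_C taking values in Option S such that F_C(ω) ≠ some C for every ω and P(F_C ≠ none) ≥ 1/16; (b) a random coloring χ taking values in S → Bool whose coordinates (χ(C))_{C ∈ S} are independent fair coin flips and such that χ is independent of the family (F_C)_{C ∈ S}. Call a cluster C merged if there exists D with F_C = some D, χ(C) = false, and χ(D) = true. Then E[ |S| − #{C ∈ S : C is merged} ] ≤ (63/64)·|S|. -/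
open MeasureTheory ProbabilityTheory

/-- Finite/countable types such as `Option S` carry the discrete σ-algebra. -/
instance optionMeasurableSpace {α : Type*} : MeasurableSpace (Option α) := ⊤

/-- With each cluster `C` in a finite set `S` (of size ≥ 2) sampling an
outgoing edge `F C` (never pointing to itself, succeeding with probability ≥ 1/16) and
an independent uniform color `χ · C`, where the colors are independent fair coins and
`χ` is independent of the whole family `F`, the expected number of unmerged clusters is
at most `(63/64)·|S|`, where `C` is merged iff `F C = some D`, `C` is Blue (`false`) and
`D` is Red (`true`). -/
theorem stmt_2 {Ω : Type*} [MeasurableSpace Ω] (μ : Measure Ω) [IsProbabilityMeasure μ]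
    (S : Type*) [Fintype S] (hS : 2 ≤ Fintype.card S)
    (F : S → Ω → Option S) (χ : Ω → S → Bool)
    (hFmeas : ∀ C, Measurable (F C)) (hχmeas : Measurable χ)
    (hFself : ∀ C ω, F C ω ≠ some C)
    (hFsucc : ∀ C, (1 : ENNReal) / 16 ≤ μ {ω | F C ω ≠ none})
    (hfair : ∀ C (b : Bool), μ {ω | χ ω C = b} = 1 / 2)
    (hindepcoins : iIndepFun
      (fun C ω => χ ω C) μ)
    (hindep : IndepFun χ (fun ω C => F C ω) μ) :
    ∫ ω, ((Fintype.card S : ℝ) -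
        ({C : S | ∃ D : S, F C ω = some D ∧ χ ω C = false ∧ χ ω D = true}.ncard : ℝ)) ∂μ
      ≤ (63 / 64 : ℝ) * (Fintype.card S : ℝ) := by
  classical
  set A : S → S → Set Ω := fun C D => {ω | F C ω = some D} with hAdef
  set M : S → Set Ω := fun C =>
    {ω | ∃ D : S, F C ω = some D ∧ χ ω C = false ∧ χ ω D = true} with hMdef
  have hAmeas : ∀ C D, MeasurableSet (A C D) := fun C D =>
    (hFmeas C) (show MeasurableSet {some D} from trivial)
  have hχC : ∀ C, Measurable (fun ω => χ ω C) := fun C =>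
    (measurable_pi_apply C).comp hχmeas
  have hBmeas : ∀ C D, MeasurableSet ({ω | χ ω C = false} ∩ {ω | χ ω D = true}) := fun C D =>
    ((hχC C) (measurableSet_singleton false)).inter ((hχC D) (measurableSet_singleton true))
  -- joint coin probability
  have hcoin : ∀ C D : S, C ≠ D →
      μ ({ω | χ ω C = false} ∩ {ω | χ ω D = true}) = 1 / 4 := by
    intro C D hCD
    have hind := hindepcoins.indepFun hCD
    have h := hind.measure_inter_preimage_eq_mul {false} {true}
      (measurableSet_singleton _) (measurableSet_singleton _)
    have h1 : μ {ω | χ ω C = false} = 1 / 2 := hfair C false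
    have h2 : μ {ω | χ ω D = true} = 1 / 2 := hfair D true
    calc μ ({ω | χ ω C = false} ∩ {ω | χ ω D = true})
        = μ {ω | χ ω C = false} * μ {ω | χ ω D = true} := h
      _ = 1 / 2 * (1 / 2) := by rw [h1, h2]
      _ = 1 / 4 := by
          rw [show (4 : ENNReal) = 2 * 2 by norm_num, one_div, one_div]
          exact (ENNReal.mul_inv (a := 2) (b := 2) (Or.inl (by norm_num))
            (Or.inl (by norm_num))).symm
  -- independence of coloring from edges
  have hcross : ∀ C D : S,
      μ (A C D ∩ ({ω | χ ω C = false} ∩ {ω | χ ω D = true}))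
        = μ ({ω | χ ω C = false} ∩ {ω | χ ω D = true}) * μ (A C D) := by
    intro C D
    have hs : MeasurableSet {f : S → Bool | f C = false ∧ f D = true} := by
      have : {f : S → Bool | f C = false ∧ f D = true}
          = ((fun f : S → Bool => f C) ⁻¹' {false}) ∩ ((fun f : S → Bool => f D) ⁻¹' {true}) :=
        rfl
      rw [this]
      exact ((measurable_pi_apply C) (measurableSet_singleton _)).inter
        ((measurable_pi_apply D) (measurableSet_singleton _))
    have ht : MeasurableSet {g : S → Option S | g C = some D} := by
      have e : {g : S → Option S | g C = some D}
          = (fun g : S → Option S => g C) ⁻¹' {some D} := rfl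
      rw [e]
      exact (measurable_pi_apply C) (show MeasurableSet {some D} from trivial)
    have h := hindep.measure_inter_preimage_eq_mul
      {f : S → Bool | f C = false ∧ f D = true} {g : S → Option S | g C = some D} hs ht
    have e1 : χ ⁻¹' {f : S → Bool | f C = false ∧ f D = true}
        = {ω | χ ω C = false} ∩ {ω | χ ω D = true} := rfl
    have e2 : (fun ω C => F C ω) ⁻¹' {g : S → Option S | g C = some D} = A C D := rfl
    rw [e1, e2] at h
    rw [Set.inter_comm]
    exact h
  -- lower bound on merge probability
  have hMmeas : ∀ C, MeasurableSet (M C) := by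
    intro C
    have : M C = ⋃ D : S, A C D ∩ ({ω | χ ω C = false} ∩ {ω | χ ω D = true}) := by
      ext ω
      simp only [hMdef, Set.mem_setOf_eq, Set.mem_iUnion, Set.mem_inter_iff, hAdef]
    rw [this]
    exact MeasurableSet.iUnion fun D => (hAmeas C D).inter (hBmeas C D)
  have hdisjA : ∀ C, Pairwise (Function.onFun Disjoint (A C)) := by
    intro C D₁ D₂ hne
    refine Set.disjoint_left.mpr fun ω h1 h2 => hne ?_
    have : some D₁ = some D₂ := h1.symm.trans h2
    exact Option.some_injective _ this
  have hMprob : ∀ C, (1 : ENNReal) / 64 ≤ μ (M C) := by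
    intro C
    have hMeq : M C = ⋃ D : S, A C D ∩ ({ω | χ ω C = false} ∩ {ω | χ ω D = true}) := by
      ext ω
      simp only [hMdef, Set.mem_setOf_eq, Set.mem_iUnion, Set.mem_inter_iff, hAdef]
    have hdisj : Pairwise (Function.onFun Disjoint
        (fun D => A C D ∩ ({ω | χ ω C = false} ∩ {ω | χ ω D = true}))) := by
      intro D₁ D₂ hne
      exact (hdisjA C hne).mono (Set.inter_subset_left) (Set.inter_subset_left)
    have hterm : ∀ D : S, μ (A C D ∩ ({ω | χ ω C = false} ∩ {ω | χ ω D = true}))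
        = 1 / 4 * μ (A C D) := by
      intro D
      by_cases hD : D = C
      · have hempty : A C D = ∅ := by
          ext ω; simp [hAdef, hD, hFself C ω]
        simp [hempty]
      · rw [hcross C D, hcoin C D (fun h => hD h.symm)]
    have hsum : μ (M C) = 1 / 4 * μ {ω | F C ω ≠ none} := by
      rw [hMeq, measure_iUnion hdisj (fun D => (hAmeas C D).inter (hBmeas C D))]
      have hUnion : {ω | F C ω ≠ none} = ⋃ D : S, A C D := by
        ext ω
        simp only [Set.mem_setOf_eq, Set.mem_iUnion, hAdef, Option.ne_none_iff_exists']
      rw [hUnion, measure_iUnion (hdisjA C) (hAmeas C), ← ENNReal.tsum_mul_left]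
      exact tsum_congr hterm
    rw [hsum]
    calc (1 : ENNReal) / 64 = 1 / 4 * (1 / 16) := by
          rw [show (64 : ENNReal) = 4 * 16 by norm_num, one_div, one_div, one_div]
          exact ENNReal.mul_inv (a := 4) (b := 16) (Or.inl (by norm_num))
            (Or.inl (by norm_num))
      _ ≤ 1 / 4 * μ {ω | F C ω ≠ none} := by
          exact mul_le_mul_right (hFsucc C) _
  -- real-valued bound
  have hMreal : ∀ C, (1 : ℝ) / 64 ≤ (μ (M C)).toReal := by
    intro C
    have h1 : ((1 : ENNReal) / 64).toReal = (1 : ℝ) / 64 := by simp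
    rw [← h1]
    exact ENNReal.toReal_mono (measure_ne_top μ _) (hMprob C)
  -- rewrite the integrand as a sum of indicators
  have hpoint : ∀ ω, ((Fintype.card S : ℝ) -
      ({C : S | ∃ D : S, F C ω = some D ∧ χ ω C = false ∧ χ ω D = true}.ncard : ℝ))
      = ∑ C : S, ((1 : ℝ) - Set.indicator (M C) (fun _ => (1 : ℝ)) ω) := by
    intro ω
    have hset : {C : S | ∃ D : S, F C ω = some D ∧ χ ω C = false ∧ χ ω D = true}
        = {C : S | ω ∈ M C} := rfl
    have hcard : ({C : S | ω ∈ M C}.ncard : ℝ)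
        = ∑ C : S, Set.indicator (M C) (fun _ => (1 : ℝ)) ω := by
      rw [Set.ncard_eq_toFinset_card', Set.toFinset_setOf]
      rw [Finset.card_filter]
      push_cast
      refine Finset.sum_congr rfl fun C _ => ?_
      by_cases h : ω ∈ M C <;> simp [Set.indicator_apply, h]
    rw [hset, hcard, Finset.sum_sub_distrib, Finset.sum_const, Finset.card_univ]
    simp
  have hintg : ∀ C : S, Integrable (fun ω => (1 : ℝ) - Set.indicator (M C) (fun _ => (1 : ℝ)) ω) μ :=
    fun C => (integrable_const 1).sub ((integrable_const 1).indicator (hMmeas C))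
  calc ∫ ω, ((Fintype.card S : ℝ) -
        ({C : S | ∃ D : S, F C ω = some D ∧ χ ω C = false ∧ χ ω D = true}.ncard : ℝ)) ∂μ
      = ∫ ω, ∑ C : S, ((1 : ℝ) - Set.indicator (M C) (fun _ => (1 : ℝ)) ω) ∂μ := by
        refine integral_congr_ae (Filter.Eventually.of_forall fun ω => hpoint ω)
    _ = ∑ C : S, ∫ ω, ((1 : ℝ) - Set.indicator (M C) (fun _ => (1 : ℝ)) ω) ∂μ :=
        integral_finset_sum _ (fun C _ => hintg C)
    _ = ∑ C : S, ((1 : ℝ) - (μ (M C)).toReal) := by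
        refine Finset.sum_congr rfl fun C _ => ?_
        rw [integral_sub (integrable_const 1) ((integrable_const 1).indicator (hMmeas C))]
        rw [integral_const, integral_indicator_const (1 : ℝ) (hMmeas C)]
        simp
        rfl
    _ ≤ ∑ C : S, (63 / 64 : ℝ) := by
        refine Finset.sum_le_sum fun C _ => ?_
        have := hMreal C
        linarith
    _ = (63 / 64 : ℝ) * (Fintype.card S : ℝ) := by
        rw [Finset.sum_const, Finset.card_univ, nsmul_eq_mul, mul_comm]
end

section
/- Let V be a finite set, χ : V → Bool a coloring, and req : V → Option V a request map with req A ≠ some A for every A ∈ V. Let M be a set of unordered pairs of elements of V such that: each pair in M consists of two distinct elements, the pairs in M are pairwise disjoint (no vertex lies in two pairs), and every vertex covered by some pair of M is rejected. Define a simple graph G on V by making A and B adjacent if and only if (A, B) or (B, A) is an accepted request, or {A, B} ∈ M. Then G is acyclic (a forest), and any two vertices lying in the same connected component of G are at graph distance at most 3 in G. -/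
section helpers

variable {V : Type*} {χ : V → Bool} {req : V → Option V} {M : Set (Sym2 V)}

private lemma adj_cases {A B : V}
    (h : (SimpleGraph.fromRel
      (fun A B => (req A = some B ∧ χ A = false ∧ χ B = true) ∨ s(A, B) ∈ M)).Adj A B) :
    (req A = some B ∧ χ A = false ∧ χ B = true) ∨
      (req B = some A ∧ χ B = false ∧ χ A = true) ∨ s(A, B) ∈ M := by
  rw [SimpleGraph.fromRel_adj] at h
  rcases h.2 with (h | h) | (h | h)
  · exact Or.inl h
  · exact Or.inr (Or.inr h)
  · exact Or.inr (Or.inl h)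
  · exact Or.inr (Or.inr (Sym2.eq_swap (a := B) ▸ h))

/-- If a Blue vertex has two neighbors, they coincide; hence any vertex with two
distinct neighbors is Red. -/
private lemma red_of_two
    (hdisj : ∀ p ∈ M, ∀ q ∈ M, p ≠ q → ∀ v : V, v ∈ p → v ∉ q)
    (hrej : ∀ p ∈ M, ∀ v : V, v ∈ p →
      ¬ ∃ B : V, req v = some B ∧ χ v = false ∧ χ B = true)
    {A B C : V}
    (hAB : (SimpleGraph.fromRel
      (fun A B => (req A = some B ∧ χ A = false ∧ χ B = true) ∨ s(A, B) ∈ M)).Adj A B)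
    (hAC : (SimpleGraph.fromRel
      (fun A B => (req A = some B ∧ χ A = false ∧ χ B = true) ∨ s(A, B) ∈ M)).Adj A C)
    (hBC : B ≠ C) : χ A = true := by
  by_contra hA
  simp only [Bool.not_eq_true] at hA
  have h1 : (req A = some B ∧ χ A = false ∧ χ B = true) ∨ s(A, B) ∈ M := by
    rcases adj_cases hAB with h | h | h
    · exact Or.inl h
    · rw [hA] at h; simp at h
    · exact Or.inr h
  have h2 : (req A = some C ∧ χ A = false ∧ χ C = true) ∨ s(A, C) ∈ M := by
    rcases adj_cases hAC with h | h | h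
    · exact Or.inl h
    · rw [hA] at h; simp at h
    · exact Or.inr h
  rcases h1 with h1 | h1
  · rcases h2 with h2 | h2
    · exact hBC (Option.some_injective _ (h1.1.symm.trans h2.1))
    · exact hrej _ h2 A (Sym2.mem_mk_left A C) ⟨B, h1⟩
  · rcases h2 with h2 | h2
    · exact hrej _ h1 A (Sym2.mem_mk_left A B) ⟨C, h2⟩
    · have heq : s(A, B) = s(A, C) := by
        by_contra hne
        exact hdisj _ h1 _ h2 hne A (Sym2.mem_mk_left A B) (Sym2.mem_mk_left A C)
      exact hBC (Sym2.congr_right.mp heq)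

/-- A Red vertex cannot have two distinct Red neighbors. -/
private lemma no_two_red
    (hdisj : ∀ p ∈ M, ∀ q ∈ M, p ≠ q → ∀ v : V, v ∈ p → v ∉ q)
    (hrej : ∀ p ∈ M, ∀ v : V, v ∈ p →
      ¬ ∃ B : V, req v = some B ∧ χ v = false ∧ χ B = true)
    {A B C : V}
    (hAB : (SimpleGraph.fromRel
      (fun A B => (req A = some B ∧ χ A = false ∧ χ B = true) ∨ s(A, B) ∈ M)).Adj A B)
    (hAC : (SimpleGraph.fromRel
      (fun A B => (req A = some B ∧ χ A = false ∧ χ B = true) ∨ s(A, B) ∈ M)).Adj A C)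
    (hBC : B ≠ C) (hB : χ B = true) (hC : χ C = true) : False := by
  have hA : χ A = true := red_of_two hdisj hrej hAB hAC hBC
  have h1 : s(A, B) ∈ M := by
    rcases adj_cases hAB with h | h | h
    · rw [hA] at h; simp at h
    · rw [hB] at h; simp at h
    · exact h
  have h2 : s(A, C) ∈ M := by
    rcases adj_cases hAC with h | h | h
    · rw [hA] at h; simp at h
    · rw [hC] at h; simp at h
    · exact h
  have heq : s(A, B) = s(A, C) := by
    by_contra hne
    exact hdisj _ h1 _ h2 hne A (Sym2.mem_mk_left A B) (Sym2.mem_mk_left A C)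
  exact hBC (Sym2.congr_right.mp heq)

private lemma path_len_le
    (hdisj : ∀ p ∈ M, ∀ q ∈ M, p ≠ q → ∀ v : V, v ∈ p → v ∉ q)
    (hrej : ∀ p ∈ M, ∀ v : V, v ∈ p →
      ¬ ∃ B : V, req v = some B ∧ χ v = false ∧ χ B = true)
    {u v : V}
    (p : (SimpleGraph.fromRel
      (fun A B => (req A = some B ∧ χ A = false ∧ χ B = true) ∨ s(A, B) ∈ M)).Walk u v)
    (hp : p.IsPath) : p.length ≤ 3 := by
  cases p with
  | nil => simp
  | cons h1 p =>
    cases p with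
    | nil => simp
    | cons h2 p =>
      cases p with
      | nil => simp
      | cons h3 p =>
        cases p with
        | nil => simp
        | cons h4 p =>
          exfalso
          rename_i a1 a2 a3 a4
          simp only [SimpleGraph.Walk.cons_isPath_iff, SimpleGraph.Walk.support_cons,
            List.mem_cons, not_or] at hp
          obtain ⟨⟨⟨⟨hp4, h34⟩, h23, h24⟩, h12, h13, h14⟩, h01, h02, h03, h04⟩ := hp
          have ha4 : a4 ∈ p.support := p.start_mem_support
          have hred1 : χ a1 = true :=
            red_of_two hdisj hrej h1.symm h2 h02
          have hred3 : χ a3 = true :=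
            red_of_two hdisj hrej h3.symm h4 (by rintro rfl; exact h24 ha4)
          exact no_two_red hdisj hrej h2.symm h3 h13 hred1 hred3

end helpers

/-- Let `χ : V → Bool` be a coloring (true = Red, false = Blue) and
`req : V → Option V` a request map with `req A ≠ some A`. A pair `(A, B)` is an accepted
request if `req A = some B`, `χ A = false` and `χ B = true`; a vertex is rejected if it
initiates no accepted request. If `M` is a matching (pairwise-disjoint set of non-diagonal
unordered pairs) covering only rejected vertices, then the graph whose edges are the
accepted requests together with the pairs of `M` is a forest in which any two vertices of
the same connected component are at distance at most 3. -/
theorem stmt_3 {V : Type*} [Fintype V] (χ : V → Bool) (req : V → Option V)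
    (hreq : ∀ A : V, req A ≠ some A)
    (M : Set (Sym2 V))
    (hdiag : ∀ p ∈ M, ¬ p.IsDiag)
    (hdisj : ∀ p ∈ M, ∀ q ∈ M, p ≠ q → ∀ v : V, v ∈ p → v ∉ q)
    (hrej : ∀ p ∈ M, ∀ v : V, v ∈ p →
      ¬ ∃ B : V, req v = some B ∧ χ v = false ∧ χ B = true)
    (G : SimpleGraph V)
    (hG : G = SimpleGraph.fromRel
      (fun A B => (req A = some B ∧ χ A = false ∧ χ B = true) ∨ s(A, B) ∈ M)) :
    G.IsAcyclic ∧ ∀ A B : V, G.Reachable A B → G.dist A B ≤ 3 := by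
  subst hG
  constructor
  · intro v c hc
    cases c with
    | nil => exact hc.ne_nil rfl
    | cons h1 p =>
      rw [SimpleGraph.Walk.cons_isCycle_iff] at hc
      obtain ⟨hpath, hedge⟩ := hc
      cases p with
      | nil => exact h1.ne rfl
      | cons h2 q =>
        cases q with
        | nil =>
          apply hedge
          simp [Sym2.eq_swap]
        | cons h3 r =>
          rename_i b u1 u2
          cases r with
          | nil =>
            -- u2 = v : triangle v - b - u1
            simp only [SimpleGraph.Walk.cons_isPath_iff, SimpleGraph.Walk.support_cons,
              SimpleGraph.Walk.support_nil, List.mem_cons, List.mem_singleton,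
              not_or] at hpath
            obtain ⟨⟨-, h1v, -⟩, hb1, hbv, -⟩ := hpath
            have hredb : χ b = true :=
              red_of_two hdisj hrej h1.symm h2 (fun h => h1v h.symm)
            have hred1 : χ u1 = true :=
              red_of_two hdisj hrej h2.symm h3 hbv
            have hredv : χ v = true :=
              red_of_two hdisj hrej h1 h3.symm hb1
            exact no_two_red hdisj hrej h1.symm h2 (fun h => h1v h.symm) hredv hred1
          | cons h4 s =>
            rename_i u3
            simp only [SimpleGraph.Walk.cons_isPath_iff, SimpleGraph.Walk.support_cons,
              List.mem_cons, not_or] at hpath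
            obtain ⟨⟨⟨hs, h13s⟩, h12, h1s⟩, hb1, hb2, hbs⟩ := hpath
            have hvs : v ∈ s.support := s.end_mem_support
            have h3s : u3 ∈ s.support := s.start_mem_support
            have h1v : v ≠ u1 := by rintro rfl; exact h1s hvs
            have h13 : u1 ≠ u3 := by rintro rfl; exact h1s h3s
            have hredb : χ b = true :=
              red_of_two hdisj hrej h1.symm h2 h1v
            have hred2 : χ u2 = true :=
              red_of_two hdisj hrej h3.symm h4 h13
            exact no_two_red hdisj hrej h2.symm h3 hb2 hredb hred2
  · intro A B hR
    classical
    obtain ⟨p⟩ := hR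
    calc _ ≤ p.bypass.length := SimpleGraph.dist_le _
    _ ≤ 3 := path_len_le hdisj hrej _ p.bypass_isPath
end

section
/- Fix an integer n ≥ 3 and let N(x) denote the number of vertices of ZMod n that are active under the coin configuration x : ZMod n → Bool. Under the uniform product measure on ZMod n → Bool, P( N ≥ (8/9)·n ) ≤ exp(−n/23328). -/
open Finset Function

namespace Stmt9

variable {n : ℕ}

def dct (v : ZMod n) (x : ZMod n → Bool) : Prop :=
  x v = true ∧ x (v + 1) = false ∧ x (v - 1) = false

instance (v : ZMod n) (x : ZMod n → Bool) : Decidable (dct v x) := by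
  unfold dct; infer_instance

noncomputable def g (b : ℝ) (v : ZMod n) (x : ZMod n → Bool) : ℝ :=
  if dct v x then b else 1

def Dc [NeZero n] (x : ZMod n → Bool) : ℕ := (univ.filter (fun v => dct v x)).card

def upd3 (v : ZMod n) (s t u : Bool) (x : ZMod n → Bool) : ZMod n → Bool :=
  update (update (update x (v - 1) s) v t) (v + 1) u

def Far (u v : ZMod n) : Prop :=
  u ≠ v ∧ u ≠ v + 1 ∧ u ≠ v - 1 ∧ u ≠ v + 2 ∧ u ≠ v - 2

lemma cast_ne_zero (hn : 3 ≤ n) {e : ℕ} (h1 : 0 < e) (h2 : e < n) : ((e : ℕ) : ZMod n) ≠ 0 := by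
  intro h
  rw [ZMod.natCast_eq_zero_iff] at h
  have hdvd := h
  have := Nat.le_of_dvd h1 hdvd
  omega

lemma nz1 (hn : 3 ≤ n) : (1 : ZMod n) ≠ 0 := by
  have := cast_ne_zero hn (e := 1) (by norm_num) (by omega)
  simpa using this

lemma nz2 (hn : 3 ≤ n) : (2 : ZMod n) ≠ 0 := by
  have := cast_ne_zero hn (e := 2) (by norm_num) (by omega)
  simpa using this

lemma hvm (hn : 3 ≤ n) (v : ZMod n) : v - 1 ≠ v :=
  fun h => nz1 hn (by linear_combination -h)

lemma hvp (hn : 3 ≤ n) (v : ZMod n) : v ≠ v + 1 :=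
  fun h => nz1 hn (by linear_combination -h)

lemma hmp (hn : 3 ≤ n) (v : ZMod n) : v - 1 ≠ v + 1 :=
  fun h => nz2 hn (by linear_combination -h)

lemma upd3_apply (v : ZMod n) (s t u : Bool) (x : ZMod n → Bool) {w : ZMod n}
    (h1 : w ≠ v - 1) (h2 : w ≠ v) (h3 : w ≠ v + 1) :
    upd3 v s t u x w = x w := by
  unfold upd3
  rw [update_of_ne h3, update_of_ne h2, update_of_ne h1]

lemma upd3_at_m (hn : 3 ≤ n) (v : ZMod n) (s t u : Bool) (x : ZMod n → Bool) :
    upd3 v s t u x (v - 1) = s := by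
  unfold upd3
  rw [update_of_ne (hmp hn v), update_of_ne (hvm hn v), update_self]

lemma upd3_at_v (hn : 3 ≤ n) (v : ZMod n) (s t u : Bool) (x : ZMod n → Bool) :
    upd3 v s t u x v = t := by
  unfold upd3
  rw [update_of_ne (hvp hn v), update_self]

lemma upd3_at_p (v : ZMod n) (s t u : Bool) (x : ZMod n → Bool) :
    upd3 v s t u x (v + 1) = u := by
  unfold upd3
  rw [update_self]

lemma g_upd3 (b : ℝ) {u v : ZMod n} (h : Far u v) (s t w : Bool) (x : ZMod n → Bool) :
    g b u (upd3 v s t w x) = g b u x := by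
  obtain ⟨h0, h1, h2, h3, h4⟩ := h
  have e1 : u + 1 ≠ v - 1 := fun hh => h4 (by linear_combination hh)
  have e2 : u + 1 ≠ v := fun hh => h2 (by linear_combination hh)
  have e3 : u + 1 ≠ v + 1 := fun hh => h0 (by linear_combination hh)
  have e4 : u - 1 ≠ v - 1 := fun hh => h0 (by linear_combination hh)
  have e5 : u - 1 ≠ v := fun hh => h1 (by linear_combination hh)
  have e6 : u - 1 ≠ v + 1 := fun hh => h3 (by linear_combination hh)
  unfold g dct
  simp only [upd3_apply v s t w x h2 h0 h1, upd3_apply v s t w x e1 e2 e3,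
    upd3_apply v s t w x e4 e5 e6]


variable [NeZero n]

lemma step (hn : 3 ≤ n) (b : ℝ) (v : ZMod n) (F : (ZMod n → Bool) → ℝ)
    (hF : ∀ (x : ZMod n → Bool) (s t u : Bool), F (upd3 v s t u x) = F x) :
    ∑ x : ZMod n → Bool, g b v x * F x = ((7 + b) / 8) * ∑ x : ZMod n → Bool, F x := by
  classical
  let τ : (ZMod n → Bool) → Bool × Bool × Bool := fun x => (x (v - 1), x v, x (v + 1))
  let c : Bool × Bool × Bool → ℝ :=
    fun t => if t.2.1 = true ∧ t.2.2 = false ∧ t.1 = false then b else 1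
  have key : ∀ t : Bool × Bool × Bool, ∀ G : (ZMod n → Bool) → ℝ,
      (∀ (x : ZMod n → Bool) (s' t' u' : Bool), G (upd3 v s' t' u' x) = G x) →
      ∑ x ∈ univ.filter (fun x => τ x = t), G x
        = ∑ x ∈ univ.filter (fun x => τ x = ((false, false, false) : Bool × Bool × Bool)), G x := by
    intro t G hG
    refine Finset.sum_nbij' (i := fun x => upd3 v false false false x)
      (j := fun x => upd3 v t.1 t.2.1 t.2.2 x) ?_ ?_ ?_ ?_ ?_
    · intro x _
      simp only [mem_filter, mem_univ, true_and]
      show (upd3 v false false false x (v - 1), upd3 v false false false x v,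
        upd3 v false false false x (v + 1)) = (false, false, false)
      rw [upd3_at_m hn, upd3_at_v hn, upd3_at_p]
    · intro x _
      simp only [mem_filter, mem_univ, true_and]
      show (upd3 v t.1 t.2.1 t.2.2 x (v - 1), upd3 v t.1 t.2.1 t.2.2 x v,
        upd3 v t.1 t.2.1 t.2.2 x (v + 1)) = t
      rw [upd3_at_m hn, upd3_at_v hn, upd3_at_p]
    · intro x hx
      simp only [mem_filter, mem_univ, true_and] at hx
      have hx1 : x (v - 1) = t.1 := by rw [← hx]
      have hx2 : x v = t.2.1 := by rw [← hx]
      have hx3 : x (v + 1) = t.2.2 := by rw [← hx]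
      funext w
      show upd3 v t.1 t.2.1 t.2.2 (upd3 v false false false x) w = x w
      rcases eq_or_ne w (v + 1) with rfl | h3
      · rw [upd3_at_p, hx3]
      rcases eq_or_ne w v with rfl | h2
      · rw [upd3_at_v hn, hx2]
      rcases eq_or_ne w (v - 1) with rfl | h1
      · rw [upd3_at_m hn, hx1]
      · rw [upd3_apply v _ _ _ _ h1 h2 h3, upd3_apply v _ _ _ _ h1 h2 h3]
    · intro x hx
      simp only [mem_filter, mem_univ, true_and] at hx
      obtain ⟨hx1, hx2, hx3⟩ : x (v - 1) = false ∧ x v = false ∧ x (v + 1) = false := by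
        simpa [τ, Prod.ext_iff] using hx
      funext w
      show upd3 v false false false (upd3 v t.1 t.2.1 t.2.2 x) w = x w
      rcases eq_or_ne w (v + 1) with rfl | h3
      · rw [upd3_at_p, hx3]
      rcases eq_or_ne w v with rfl | h2
      · rw [upd3_at_v hn, hx2]
      rcases eq_or_ne w (v - 1) with rfl | h1
      · rw [upd3_at_m hn, hx1]
      · rw [upd3_apply v _ _ _ _ h1 h2 h3, upd3_apply v _ _ _ _ h1 h2 h3]
    · intro x _
      exact (hG x false false false).symm
  have gconst : ∀ (t : Bool × Bool × Bool) (x : ZMod n → Bool), τ x = t → g b v x = c t := by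
    intro t x h
    have h1 : x (v - 1) = t.1 := by rw [← h]
    have h2 : x v = t.2.1 := by rw [← h]
    have h3 : x (v + 1) = t.2.2 := by rw [← h]
    unfold g dct
    simp only [h1, h2, h3]
    rfl
  set Z := ∑ x ∈ univ.filter (fun x => τ x = ((false, false, false) : Bool × Bool × Bool)), F x
    with hZ
  have hL : ∑ x : ZMod n → Bool, g b v x * F x = (∑ t : Bool × Bool × Bool, c t) * Z := by
    rw [← Finset.sum_fiberwise univ τ (fun x => g b v x * F x), Finset.sum_mul]
    refine Finset.sum_congr rfl fun t _ => ?_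
    have h1 : ∑ x ∈ univ.filter (fun x => τ x = t), g b v x * F x
        = ∑ x ∈ univ.filter (fun x => τ x = t), c t * F x := by
      refine Finset.sum_congr rfl fun x hx => ?_
      rw [gconst t x (by simpa using hx)]
    rw [h1, ← Finset.mul_sum, key t F (fun x s' t' u' => hF x s' t' u')]
  have hR : ∑ x : ZMod n → Bool, F x = 8 * Z := by
    rw [← Finset.sum_fiberwise univ τ F,
      Finset.sum_congr rfl (fun t _ => key t F (fun x s' t' u' => hF x s' t' u')),
      Finset.sum_const, Finset.card_univ]
    simp only [← hZ, Fintype.card_prod, Fintype.card_bool, nsmul_eq_mul]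
    norm_num
  have hsum : ∑ t : Bool × Bool × Bool, c t = 7 + b := by
    show ∑ t : Bool × Bool × Bool,
      (if t.2.1 = true ∧ t.2.2 = false ∧ t.1 = false then b else 1) = 7 + b
    rw [Fintype.sum_prod_type]
    simp only [Fintype.sum_prod_type, Fintype.sum_bool]
    norm_num
    ring
  rw [hL, hR, hsum]
  ring

lemma sum_prod_g (hn : 3 ≤ n) (b : ℝ) (C : Finset (ZMod n))
    (hC : ∀ u ∈ C, ∀ v ∈ C, u ≠ v → Far u v) :
    ∑ x : ZMod n → Bool, ∏ v ∈ C, g b v x = ((7 + b) / 8) ^ C.card * 2 ^ n := by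
  classical
  induction C using Finset.induction_on with
  | empty =>
      simp only [Finset.prod_empty, Finset.card_empty, pow_zero, one_mul, Finset.sum_const,
        card_univ, nsmul_eq_mul, mul_one]
      rw [Fintype.card_fun]
      simp [ZMod.card]
  | insert a s ha ih =>
      have hstep := step hn b a (fun x => ∏ v ∈ s, g b v x) ?_
      · rw [Finset.sum_congr rfl (fun (x : ZMod n → Bool) _ => Finset.prod_insert ha), hstep,
          ih ?_, Finset.card_insert_of_notMem ha]
        · ring
        · intro u hu v hv huv
          exact hC u (Finset.mem_insert_of_mem hu) v (Finset.mem_insert_of_mem hv) huv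
      · intro x s' t' u'
        refine Finset.prod_congr rfl fun u hu => ?_
        refine g_upd3 b ?_ s' t' u' x
        exact hC u (Finset.mem_insert_of_mem hu) a (Finset.mem_insert_self a s)
          (fun h => ha (h ▸ hu))


lemma g_nonneg {b : ℝ} (hb : 0 ≤ b) (v : ZMod n) (x : ZMod n → Bool) : 0 ≤ g b v x := by
  unfold g; split_ifs
  · exact hb
  · norm_num

lemma prod_g_nonneg {b : ℝ} (hb : 0 ≤ b) (C : Finset (ZMod n)) (x : ZMod n → Bool) :
    0 ≤ ∏ v ∈ C, g b v x :=
  Finset.prod_nonneg fun v _ => g_nonneg hb v x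

lemma prod_g_sq (b : ℝ) (C : Finset (ZMod n)) (x : ZMod n → Bool) :
    (∏ v ∈ C, g b v x) ^ 2 = ∏ v ∈ C, g (b ^ 2) v x := by
  rw [← Finset.prod_pow]
  refine Finset.prod_congr rfl fun v _ => ?_
  unfold g; split_ifs <;> norm_num

lemma prod_univ_g (b : ℝ) (x : ZMod n → Bool) :
    ∏ v : ZMod n, g b v x = b ^ Dc x := by
  unfold g Dc
  rw [Finset.prod_ite, Finset.prod_const, Finset.prod_const_one, mul_one]

def colN (n i : ℕ) : ℕ :=
  if n % 3 = 0 then i % 3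
  else if n % 3 = 1 then (if i = n - 1 then 3 else i % 3)
  else (if i < n - 8 then i % 3 else (i - (n - 8)) % 4)

lemma colN_lt (n i : ℕ) : colN n i < 4 := by
  unfold colN; split_ifs <;> omega

lemma colN_far {n : ℕ} (hn : 3 ≤ n) (h5 : n ≠ 5) {i j : ℕ} (hij : i < j) (hj : j < n)
    (hc : colN n i = colN n j) : 3 ≤ j - i ∧ j + 3 ≤ i + n := by
  unfold colN at hc; split_ifs at hc <;> omega

lemma far_of_vals (hn : 3 ≤ n) {i j : ℕ} (hj : j < n) (hij : i < j)
    (h3 : 3 ≤ j - i) (h4 : j + 3 ≤ i + n) :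
    Far ((i : ZMod n)) ((j : ZMod n)) ∧ Far ((j : ZMod n)) ((i : ZMod n)) := by
  set d := j - i with hd
  have hcast : ((j : ℕ) : ZMod n) = ((i : ℕ) : ZMod n) + ((d : ℕ) : ZMod n) := by
    have : j = i + d := by omega
    rw [this]; push_cast; ring
  have A0 : ((d : ℕ) : ZMod n) ≠ 0 := cast_ne_zero hn (by omega) (by omega)
  have A1 : ((d - 1 : ℕ) : ZMod n) ≠ 0 := cast_ne_zero hn (by omega) (by omega)
  have A2 : ((d - 2 : ℕ) : ZMod n) ≠ 0 := cast_ne_zero hn (by omega) (by omega)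
  have B1 : ((d + 1 : ℕ) : ZMod n) ≠ 0 := cast_ne_zero hn (by omega) (by omega)
  have B2 : ((d + 2 : ℕ) : ZMod n) ≠ 0 := cast_ne_zero hn (by omega) (by omega)
  have c1 : ((d - 1 : ℕ) : ZMod n) = ((d : ℕ) : ZMod n) - 1 := by
    rw [Nat.cast_sub (by omega)]; norm_num
  have c2 : ((d - 2 : ℕ) : ZMod n) = ((d : ℕ) : ZMod n) - 2 := by
    rw [Nat.cast_sub (by omega)]; norm_num
  have p1 : ((d + 1 : ℕ) : ZMod n) = ((d : ℕ) : ZMod n) + 1 := by push_cast; ring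
  have p2 : ((d + 2 : ℕ) : ZMod n) = ((d : ℕ) : ZMod n) + 2 := by push_cast; ring
  constructor
  · refine ⟨?_, ?_, ?_, ?_, ?_⟩ <;> intro h <;> rw [hcast] at h
    · exact A0 (by linear_combination -h)
    · exact B1 (by rw [p1]; linear_combination -h)
    · exact A1 (by rw [c1]; linear_combination -h)
    · exact B2 (by rw [p2]; linear_combination -h)
    · exact A2 (by rw [c2]; linear_combination -h)
  · refine ⟨?_, ?_, ?_, ?_, ?_⟩ <;> intro h <;> rw [hcast] at h
    · exact A0 (by linear_combination h)
    · exact A1 (by rw [c1]; linear_combination h)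
    · exact B1 (by rw [p1]; linear_combination h)
    · exact A2 (by rw [c2]; linear_combination h)
    · exact B2 (by rw [p2]; linear_combination h)

def cls (n : ℕ) [NeZero n] (r : ℕ) : Finset (ZMod n) :=
  univ.filter (fun v => colN n v.val = r)

lemma cls_far (hn : 3 ≤ n) (h5 : n ≠ 5) (r : ℕ) :
    ∀ u ∈ cls n r, ∀ v ∈ cls n r, u ≠ v → Far u v := by
  intro u hu v hv huv
  simp only [cls, mem_filter, mem_univ, true_and] at hu hv
  have hune : u.val ≠ v.val := fun h => huv (by rw [← ZMod.natCast_zmod_val u, ← ZMod.natCast_zmod_val v, h])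
  have hu' : u.val < n := ZMod.val_lt u
  have hv' : v.val < n := ZMod.val_lt v
  rcases lt_or_gt_of_ne hune with hlt | hgt
  · have hfar := colN_far hn h5 hlt hv' (hu.trans hv.symm)
    have := (far_of_vals hn hv' hlt hfar.1 hfar.2).1
    rwa [ZMod.natCast_zmod_val, ZMod.natCast_zmod_val] at this
  · have hfar := colN_far hn h5 hgt hu' (hv.trans hu.symm)
    have := (far_of_vals hn hu' hgt hfar.1 hfar.2).2
    rwa [ZMod.natCast_zmod_val, ZMod.natCast_zmod_val] at this


lemma main_count (hn : 3 ≤ n) (h5 : n ≠ 5) :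
    ((univ.filter (fun x : ZMod n → Bool => 9 * Dc x ≤ n)).card : ℝ)
      ≤ 2 ^ n * Real.exp (-(n : ℝ) / 23328) := by
  classical
  set a : ℝ := 399 / 400 with ha
  set b : ℝ := a ^ 9 with hbdef
  have ha0 : (0:ℝ) < a := by rw [ha]; norm_num
  have hb0 : (0:ℝ) ≤ b := by positivity
  set fs := univ.filter (fun x : ZMod n → Bool => 9 * Dc x ≤ n) with hfs
  set T := ∑ x : ZMod n → Bool, b ^ Dc x with hT
  have h1 : (fs.card : ℝ) * a ^ n ≤ T := by
    calc (fs.card : ℝ) * a ^ n = ∑ _x ∈ fs, a ^ n := by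
          rw [Finset.sum_const, nsmul_eq_mul]
      _ ≤ ∑ x ∈ fs, b ^ Dc x := by
          refine Finset.sum_le_sum fun x hx => ?_
          rw [hbdef, ← pow_mul]
          refine pow_le_pow_of_le_one (by positivity) (by rw [ha]; norm_num) ?_
          exact (Finset.mem_filter.1 hx).2
      _ ≤ T := by
          refine Finset.sum_le_sum_of_subset_of_nonneg (Finset.subset_univ _) ?_
          intro x _ _; positivity
  have hfac : ∀ (r : ℕ) (β : ℝ),
      ∑ x : ZMod n → Bool, ∏ v ∈ cls n r, g β v x = ((7 + β) / 8) ^ (cls n r).card * 2 ^ n :=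
    fun r β => sum_prod_g hn β (cls n r) (cls_far hn h5 r)
  have hexp4 : ∀ x : ZMod n → Bool, (b:ℝ) ^ Dc x
      = (∏ v ∈ cls n 0, g b v x) * ((∏ v ∈ cls n 1, g b v x) *
        ((∏ v ∈ cls n 2, g b v x) * (∏ v ∈ cls n 3, g b v x))) := by
    intro x
    rw [← prod_univ_g b x,
      ← Finset.prod_fiberwise_of_maps_to (g := fun v : ZMod n => colN n v.val)
        (t := Finset.range 4) (fun v _ => Finset.mem_range.2 (colN_lt n v.val))
        (fun v => g b v x)]
    show ∏ r ∈ Finset.range 4, ∏ v ∈ cls n r, g b v x = _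
    rw [Finset.prod_range_succ, Finset.prod_range_succ, Finset.prod_range_succ,
      Finset.prod_range_one]
    ring
  have hcard : (cls n 0).card + (cls n 1).card + (cls n 2).card + (cls n 3).card = n := by
    have h := Finset.card_eq_sum_card_fiberwise
      (f := fun v : ZMod n => colN n v.val) (s := univ) (t := Finset.range 4)
      (fun v _ => Finset.mem_range.2 (colN_lt n v.val))
    rw [Finset.card_univ, ZMod.card] at h
    have h2 : ∑ r ∈ Finset.range 4, (cls n r).card = n := by
      unfold cls
      exact h.symm
    rw [Finset.sum_range_succ, Finset.sum_range_succ, Finset.sum_range_succ,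
      Finset.sum_range_one] at h2
    omega
  -- Cauchy-Schwarz chain
  have cs1 : T ^ 2 ≤ (∑ x : ZMod n → Bool, ∏ v ∈ cls n 0, g (b^2) v x) *
      (∑ x : ZMod n → Bool, (∏ v ∈ cls n 1, g (b^2) v x) *
        ((∏ v ∈ cls n 2, g (b^2) v x) * (∏ v ∈ cls n 3, g (b^2) v x))) := by
    have hcs := Finset.sum_mul_sq_le_sq_mul_sq univ
      (fun x : ZMod n → Bool => ∏ v ∈ cls n 0, g b v x)
      (fun x : ZMod n → Bool => (∏ v ∈ cls n 1, g b v x) *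
        ((∏ v ∈ cls n 2, g b v x) * (∏ v ∈ cls n 3, g b v x)))
    have e1 : T = ∑ x : ZMod n → Bool, (∏ v ∈ cls n 0, g b v x) *
        ((∏ v ∈ cls n 1, g b v x) * ((∏ v ∈ cls n 2, g b v x) * (∏ v ∈ cls n 3, g b v x))) :=
      Finset.sum_congr rfl fun x _ => hexp4 x
    rw [e1]
    refine le_trans hcs (le_of_eq ?_)
    congr 1
    · exact Finset.sum_congr rfl fun x _ => prod_g_sq b _ x
    · refine Finset.sum_congr rfl fun x _ => ?_
      rw [mul_pow, mul_pow, prod_g_sq, prod_g_sq, prod_g_sq]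
  have cs2 : (∑ x : ZMod n → Bool, (∏ v ∈ cls n 1, g (b^2) v x) *
        ((∏ v ∈ cls n 2, g (b^2) v x) * (∏ v ∈ cls n 3, g (b^2) v x))) ^ 2
      ≤ (∑ x : ZMod n → Bool, ∏ v ∈ cls n 1, g (b^4) v x) *
        (∑ x : ZMod n → Bool, (∏ v ∈ cls n 2, g (b^4) v x) * (∏ v ∈ cls n 3, g (b^4) v x)) := by
    have hcs := Finset.sum_mul_sq_le_sq_mul_sq univ
      (fun x : ZMod n → Bool => ∏ v ∈ cls n 1, g (b^2) v x)
      (fun x : ZMod n → Bool => (∏ v ∈ cls n 2, g (b^2) v x) * (∏ v ∈ cls n 3, g (b^2) v x))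
    refine le_trans hcs (le_of_eq ?_)
    have hb24 : (b^2)^2 = b^4 := by ring
    congr 1
    · refine Finset.sum_congr rfl fun x _ => ?_
      rw [prod_g_sq, hb24]
    · refine Finset.sum_congr rfl fun x _ => ?_
      rw [mul_pow, prod_g_sq, prod_g_sq, hb24]
  have cs3 : (∑ x : ZMod n → Bool, (∏ v ∈ cls n 2, g (b^4) v x) * (∏ v ∈ cls n 3, g (b^4) v x)) ^ 2
      ≤ (∑ x : ZMod n → Bool, ∏ v ∈ cls n 2, g (b^8) v x) *
        (∑ x : ZMod n → Bool, ∏ v ∈ cls n 3, g (b^8) v x) := by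
    have hcs := Finset.sum_mul_sq_le_sq_mul_sq univ
      (fun x : ZMod n → Bool => ∏ v ∈ cls n 2, g (b^4) v x)
      (fun x : ZMod n → Bool => ∏ v ∈ cls n 3, g (b^4) v x)
    refine le_trans hcs (le_of_eq ?_)
    have hb48 : (b^4)^2 = b^8 := by ring
    congr 1
    · exact Finset.sum_congr rfl fun x _ => by rw [prod_g_sq, hb48]
    · exact Finset.sum_congr rfl fun x _ => by rw [prod_g_sq, hb48]
  -- nonnegativity of the intermediate sums
  have hU1 : (0:ℝ) ≤ ∑ x : ZMod n → Bool, (∏ v ∈ cls n 1, g (b^2) v x) *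
      ((∏ v ∈ cls n 2, g (b^2) v x) * (∏ v ∈ cls n 3, g (b^2) v x)) := by
    refine Finset.sum_nonneg fun x _ => ?_
    have h2 : (0:ℝ) ≤ b^2 := by positivity
    exact mul_nonneg (prod_g_nonneg h2 _ x)
      (mul_nonneg (prod_g_nonneg h2 _ x) (prod_g_nonneg h2 _ x))
  have hU2 : (0:ℝ) ≤ ∑ x : ZMod n → Bool, (∏ v ∈ cls n 2, g (b^4) v x) *
      (∏ v ∈ cls n 3, g (b^4) v x) := by
    refine Finset.sum_nonneg fun x _ => ?_
    have h4 : (0:ℝ) ≤ b^4 := by positivity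
    exact mul_nonneg (prod_g_nonneg h4 _ x) (prod_g_nonneg h4 _ x)
  have hA0 : (0:ℝ) ≤ ∑ x : ZMod n → Bool, ∏ v ∈ cls n 0, g (b^2) v x :=
    Finset.sum_nonneg fun x _ => prod_g_nonneg (by positivity) _ x
  have hA1 : (0:ℝ) ≤ ∑ x : ZMod n → Bool, ∏ v ∈ cls n 1, g (b^4) v x :=
    Finset.sum_nonneg fun x _ => prod_g_nonneg (by positivity) _ x
  -- combine
  have pow8 : T ^ 8 ≤ ((7 + b^2) / 8) ^ (4 * (cls n 0).card) *
      (((7 + b^4) / 8) ^ (2 * (cls n 1).card) *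
      (((7 + b^8) / 8) ^ (cls n 2).card * ((7 + b^8) / 8) ^ (cls n 3).card)) * 2 ^ (8 * n) := by
    have step1 : T ^ 8 ≤ ((∑ x : ZMod n → Bool, ∏ v ∈ cls n 0, g (b^2) v x)) ^ 4 *
        ((∑ x : ZMod n → Bool, (∏ v ∈ cls n 1, g (b^2) v x) *
          ((∏ v ∈ cls n 2, g (b^2) v x) * (∏ v ∈ cls n 3, g (b^2) v x)))) ^ 4 := by
      calc T ^ 8 = (T ^ 2) ^ 4 := by ring
        _ ≤ (((∑ x : ZMod n → Bool, ∏ v ∈ cls n 0, g (b^2) v x)) *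
            ((∑ x : ZMod n → Bool, (∏ v ∈ cls n 1, g (b^2) v x) *
              ((∏ v ∈ cls n 2, g (b^2) v x) * (∏ v ∈ cls n 3, g (b^2) v x))))) ^ 4 :=
          pow_le_pow_left₀ (sq_nonneg T) cs1 4
        _ = _ := by ring
    have step2 : ((∑ x : ZMod n → Bool, (∏ v ∈ cls n 1, g (b^2) v x) *
          ((∏ v ∈ cls n 2, g (b^2) v x) * (∏ v ∈ cls n 3, g (b^2) v x)))) ^ 4
        ≤ ((∑ x : ZMod n → Bool, ∏ v ∈ cls n 1, g (b^4) v x)) ^ 2 *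
          ((∑ x : ZMod n → Bool, (∏ v ∈ cls n 2, g (b^4) v x) * (∏ v ∈ cls n 3, g (b^4) v x))) ^ 2 := by
      calc _ = ((∑ x : ZMod n → Bool, (∏ v ∈ cls n 1, g (b^2) v x) *
          ((∏ v ∈ cls n 2, g (b^2) v x) * (∏ v ∈ cls n 3, g (b^2) v x))) ^ 2) ^ 2 := by ring
        _ ≤ (((∑ x : ZMod n → Bool, ∏ v ∈ cls n 1, g (b^4) v x)) *
            ((∑ x : ZMod n → Bool, (∏ v ∈ cls n 2, g (b^4) v x) * (∏ v ∈ cls n 3, g (b^4) v x)))) ^ 2 :=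
          pow_le_pow_left₀ (sq_nonneg _) cs2 2
        _ = _ := by ring
    calc T ^ 8 ≤ _ := step1
      _ ≤ ((∑ x : ZMod n → Bool, ∏ v ∈ cls n 0, g (b^2) v x)) ^ 4 *
          (((∑ x : ZMod n → Bool, ∏ v ∈ cls n 1, g (b^4) v x)) ^ 2 *
          ((∑ x : ZMod n → Bool, (∏ v ∈ cls n 2, g (b^4) v x) * (∏ v ∈ cls n 3, g (b^4) v x))) ^ 2) := by
        refine mul_le_mul_of_nonneg_left ?_ (by positivity)
        exact step2
      _ ≤ ((∑ x : ZMod n → Bool, ∏ v ∈ cls n 0, g (b^2) v x)) ^ 4 *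
          (((∑ x : ZMod n → Bool, ∏ v ∈ cls n 1, g (b^4) v x)) ^ 2 *
          ((∑ x : ZMod n → Bool, ∏ v ∈ cls n 2, g (b^8) v x) *
           (∑ x : ZMod n → Bool, ∏ v ∈ cls n 3, g (b^8) v x))) := by
        refine mul_le_mul_of_nonneg_left (mul_le_mul_of_nonneg_left cs3 (by positivity)) ?_
        positivity
      _ = _ := by
        rw [hfac 0 (b^2), hfac 1 (b^4), hfac 2 (b^8), hfac 3 (b^8)]
        rw [mul_pow, mul_pow, ← pow_mul, ← pow_mul, ← pow_mul, ← pow_mul]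
        ring
  -- numeric per-class bounds
  set ρ : ℝ := 2915 / 2916 with hρ
  have n2 : ((7 + b^2) / 8) ^ 4 ≤ a ^ 8 * ρ := by
    rw [hρ, hbdef, ha]; norm_num
  have n4 : ((7 + b^4) / 8) ^ 2 ≤ a ^ 8 * ρ := by
    rw [hρ, hbdef, ha]; norm_num
  have n8 : ((7 + b^8) / 8) ≤ a ^ 8 * ρ := by
    rw [hρ, hbdef, ha]; norm_num
  have hbase2 : (0:ℝ) ≤ (7 + b^2) / 8 := by positivity
  have hbase4 : (0:ℝ) ≤ (7 + b^4) / 8 := by positivity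
  have hbase8 : (0:ℝ) ≤ (7 + b^8) / 8 := by positivity
  have hmono : ((7 + b^2) / 8) ^ (4 * (cls n 0).card) *
      (((7 + b^4) / 8) ^ (2 * (cls n 1).card) *
      (((7 + b^8) / 8) ^ (cls n 2).card * ((7 + b^8) / 8) ^ (cls n 3).card))
      ≤ (a ^ 8 * ρ) ^ n := by
    have m0 : ((7 + b^2) / 8) ^ (4 * (cls n 0).card) ≤ (a^8*ρ) ^ (cls n 0).card := by
      rw [pow_mul]
      exact pow_le_pow_left₀ (by positivity) n2 _
    have m1 : ((7 + b^4) / 8) ^ (2 * (cls n 1).card) ≤ (a^8*ρ) ^ (cls n 1).card := by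
      rw [pow_mul]
      exact pow_le_pow_left₀ (by positivity) n4 _
    have m2 : ((7 + b^8) / 8) ^ (cls n 2).card ≤ (a^8*ρ) ^ (cls n 2).card :=
      pow_le_pow_left₀ hbase8 n8 _
    have m3 : ((7 + b^8) / 8) ^ (cls n 3).card ≤ (a^8*ρ) ^ (cls n 3).card :=
      pow_le_pow_left₀ hbase8 n8 _
    calc ((7 + b^2) / 8) ^ (4 * (cls n 0).card) *
        (((7 + b^4) / 8) ^ (2 * (cls n 1).card) *
        (((7 + b^8) / 8) ^ (cls n 2).card * ((7 + b^8) / 8) ^ (cls n 3).card))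
        ≤ (a^8*ρ) ^ (cls n 0).card * ((a^8*ρ) ^ (cls n 1).card *
          ((a^8*ρ) ^ (cls n 2).card * (a^8*ρ) ^ (cls n 3).card)) := by
          refine mul_le_mul m0 ?_ (by positivity) (by positivity)
          refine mul_le_mul m1 ?_ (by positivity) (by positivity)
          exact mul_le_mul m2 m3 (by positivity) (by positivity)
      _ = (a^8*ρ) ^ ((cls n 0).card + (cls n 1).card + (cls n 2).card + (cls n 3).card) := by
          rw [pow_add, pow_add, pow_add]; ring
      _ = (a^8*ρ) ^ n := by rw [hcard]
  have hfinal8 : (fs.card : ℝ) ^ 8 ≤ 2 ^ (8*n) * ρ ^ n := by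
    have hTnn : (0:ℝ) ≤ (fs.card : ℝ) * a ^ n := by positivity
    have h8 : ((fs.card : ℝ) * a ^ n) ^ 8 ≤ T ^ 8 := pow_le_pow_left₀ hTnn h1 8
    have hchain : ((fs.card : ℝ) * a ^ n) ^ 8 ≤ (a ^ 8 * ρ) ^ n * 2 ^ (8*n) := by
      refine le_trans h8 (le_trans pow8 ?_)
      exact mul_le_mul_of_nonneg_right hmono (by positivity)
    have hrw : (a ^ 8 * ρ) ^ n * 2 ^ (8*n) = (2 ^ (8*n) * ρ ^ n) * (a ^ n) ^ 8 := by
      rw [mul_pow, ← pow_mul, ← pow_mul]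
      ring
    rw [hrw] at hchain
    have hpos : (0:ℝ) < (a ^ n) ^ 8 := by positivity
    have : (fs.card : ℝ) ^ 8 * (a ^ n) ^ 8 ≤ (2 ^ (8*n) * ρ ^ n) * (a ^ n) ^ 8 := by
      calc (fs.card : ℝ) ^ 8 * (a ^ n) ^ 8 = ((fs.card : ℝ) * a ^ n) ^ 8 := by ring
        _ ≤ _ := hchain
    exact le_of_mul_le_mul_right this hpos
  have hρexp : ρ ^ n ≤ Real.exp (-(n:ℝ) / 2916) := by
    have h1' : ρ ≤ Real.exp (-(1:ℝ)/2916) := by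
      have := Real.add_one_le_exp (-(1:ℝ)/2916)
      rw [hρ]; linarith
    calc ρ ^ n ≤ (Real.exp (-(1:ℝ)/2916)) ^ n := by
          exact pow_le_pow_left₀ (by rw [hρ]; norm_num) h1' n
      _ = Real.exp (-(n:ℝ)/2916) := by
          rw [← Real.exp_nat_mul]
          congr 1
          ring
  have hfinal : (fs.card : ℝ) ^ 8 ≤ (2 ^ n * Real.exp (-(n:ℝ) / 23328)) ^ 8 := by
    have : (2 ^ n * Real.exp (-(n:ℝ) / 23328)) ^ 8 = 2 ^ (8*n) * Real.exp (-(n:ℝ)/2916) := by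
      rw [mul_pow, ← pow_mul, ← Real.exp_nat_mul]
      rw [mul_comm n 8]
      congr 1
      ring
    rw [this]
    exact le_trans hfinal8 (mul_le_mul_of_nonneg_left hρexp (by positivity))
  exact le_of_pow_le_pow_left₀ (by norm_num) (by positivity) hfinal


lemma Dc_le (x : ZMod n → Bool) : Dc x ≤ n := by
  unfold Dc
  calc (univ.filter (fun v => dct v x)).card ≤ (univ : Finset (ZMod n)).card :=
        Finset.card_filter_le _ _
    _ = n := by rw [Finset.card_univ, ZMod.card]

lemma ncard_eq (x : ZMod n → Bool) :
    {v : ZMod n | ¬(x v = true ∧ x (v + 1) = false ∧ x (v - 1) = false)}.ncard = n - Dc x := by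
  have h1 : {v : ZMod n | ¬(x v = true ∧ x (v + 1) = false ∧ x (v - 1) = false)}.ncard
      = (univ.filter (fun v : ZMod n => ¬ dct v x)).card := by
    rw [Set.ncard_eq_toFinset_card']
    congr 1
    ext v
    simp [dct]
  have h2 := Finset.card_filter_add_card_filter_not
    (s := (univ : Finset (ZMod n))) (p := fun v => dct v x)
  rw [Finset.card_univ, ZMod.card] at h2
  unfold Dc
  omega

lemma event_eq (x : ZMod n → Bool) :
    ((8 / 9 : ℝ) * n ≤
      (({v : ZMod n | ¬(x v = true ∧ x (v + 1) = false ∧ x (v - 1) = false)}.ncard : ℝ)))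
      ↔ 9 * Dc x ≤ n := by
  rw [ncard_eq x, Nat.cast_sub (Dc_le x)]
  constructor
  · intro h
    have h' : ((9 * Dc x : ℕ) : ℝ) ≤ (n : ℝ) := by push_cast; linarith
    exact_mod_cast h'
  · intro h
    have h' : ((9 * Dc x : ℕ) : ℝ) ≤ (n : ℝ) := by exact_mod_cast h
    push_cast at h'
    linarith

lemma five_aux : ¬ (9 * Dc (n := 5) (fun v => decide (v = 0)) ≤ 5) := by decide

lemma count_five (h5 : n = 5) :
    ((univ.filter (fun x : ZMod n → Bool => 9 * Dc x ≤ n)).card : ℝ)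
      ≤ 2 ^ n * Real.exp (-(n : ℝ) / 23328) := by
  subst h5
  have hx0 : (fun v : ZMod 5 => decide (v = 0)) ∉
      (univ.filter (fun x : ZMod 5 → Bool => 9 * Dc x ≤ 5)) := by
    simp only [Finset.mem_filter, Finset.mem_univ, true_and]
    exact five_aux
  have hsub : (univ.filter (fun x : ZMod 5 → Bool => 9 * Dc x ≤ 5))
      ⊆ univ.erase (fun v : ZMod 5 => decide (v = 0)) := by
    intro x hx
    refine Finset.mem_erase.2 ⟨?_, Finset.mem_univ x⟩
    intro h
    exact hx0 (h ▸ hx)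
  have hcard : (univ.filter (fun x : ZMod 5 → Bool => 9 * Dc x ≤ 5)).card ≤ 31 := by
    have := Finset.card_le_card hsub
    rw [Finset.card_erase_of_mem (Finset.mem_univ _), Finset.card_univ] at this
    have hcf : Fintype.card (ZMod 5 → Bool) = 32 := by
      rw [Fintype.card_fun, Fintype.card_bool, ZMod.card]
      norm_num
    omega
  have hexp : (23323 : ℝ) / 23328 ≤ Real.exp (-(5:ℝ) / 23328) := by
    have := Real.add_one_le_exp (-(5:ℝ)/23328)
    linarith
  have : ((univ.filter (fun x : ZMod 5 → Bool => 9 * Dc x ≤ 5)).card : ℝ) ≤ 31 := by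
    exact_mod_cast hcard
  refine le_trans this ?_
  have h32 : (2:ℝ) ^ (5:ℕ) = 32 := by norm_num
  push_cast
  rw [h32]
  nlinarith [hexp]

lemma count_all (hn : 3 ≤ n) :
    ((univ.filter (fun x : ZMod n → Bool => 9 * Dc x ≤ n)).card : ℝ)
      ≤ 2 ^ n * Real.exp (-(n : ℝ) / 23328) := by
  by_cases h5 : n = 5
  · exact count_five h5
  · exact main_count hn h5

end Stmt9

/-- For `n ≥ 3`, let `N(x)` be the number of active vertices of `ZMod n`
under the coin configuration `x` (a vertex is deactivated when its coin is heads and both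
cycle-neighbors' coins are tails; otherwise it is active). Under the uniform (product of
fair coins) measure, `P(N ≥ (8/9)·n) ≤ exp(−n/23328)`. -/
theorem stmt_9 (n : ℕ) (hn : 3 ≤ n) [NeZero n] :
    (PMF.uniformOfFintype (ZMod n → Bool)).toMeasure
      {x : ZMod n → Bool |
        (8 / 9 : ℝ) * n ≤
          (({v : ZMod n | ¬(x v = true ∧ x (v + 1) = false ∧ x (v - 1) = false)}.ncard : ℝ))}
      ≤ ENNReal.ofReal (Real.exp (-(n : ℝ) / 23328)) := by
  classical
  have hSet : {x : ZMod n → Bool |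
      (8 / 9 : ℝ) * n ≤
        (({v : ZMod n | ¬(x v = true ∧ x (v + 1) = false ∧ x (v - 1) = false)}.ncard : ℝ))}
      = ↑(Finset.univ.filter (fun x : ZMod n → Bool => 9 * Stmt9.Dc x ≤ n)) := by
    ext x
    simp only [Set.mem_setOf_eq, Finset.coe_filter, Finset.mem_univ, true_and]
    exact Stmt9.event_eq x
  rw [hSet, PMF.toMeasure_apply_finset]
  simp only [PMF.uniformOfFintype_apply]
  rw [Finset.sum_const, nsmul_eq_mul]
  have hcardfun : (Fintype.card (ZMod n → Bool)) = 2 ^ n := by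
    rw [Fintype.card_fun, Fintype.card_bool, ZMod.card]
  rw [hcardfun]
  have hmain := Stmt9.count_all (n := n) hn
  set m := (Finset.univ.filter (fun x : ZMod n → Bool => 9 * Stmt9.Dc x ≤ n)).card with hm
  have hpos : (0:ℝ) < ((2^n : ℕ) : ℝ) := by
    exact_mod_cast pow_pos (by norm_num : (0:ℕ) < 2) n
  rw [← ENNReal.ofReal_natCast m, ← ENNReal.ofReal_natCast (2^n),
    ← ENNReal.ofReal_inv_of_pos hpos, ← ENNReal.ofReal_mul (by positivity)]
  apply ENNReal.ofReal_le_ofReal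
  rw [← div_eq_mul_inv, div_le_iff₀ hpos]
  calc (m : ℝ) ≤ 2^n * Real.exp (-(n : ℝ) / 23328) := hmain
    _ = Real.exp (-(n : ℝ) / 23328) * ((2^n : ℕ) : ℝ) := by push_cast; ring
end
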